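/- Let M be an evolving sphere-like surface with parametrisation y(t,ξ) = ρ̃(t,x(ξ))x(ξ) and let f̂ : M → ℝ correspond to f̃ : I × S² → ℝ via f̃(t,x(ξ)) = f̂(t,y(t,ξ)). Let ṽ = vⁱ∂ᵢx on S² and v̂ = vⁱ∂ᵢy on M_t be related via the differential Dφ̃. Then the parametrised optical flow equation d_t^{V̂}f̂ + ∇_M f̂ · v̂ = 0 on M_t holds if and only if ∂_t f̃ + ∇_{S²}f̃ · ṽ = 0 on S². -/

import Mathlib

noncomputable section
open scoped RealInnerProductSpace
open Metric

abbrev E2 := EuclideanSpace ℝ (Fin 2)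
abbrev E3 := EuclideanSpace ℝ (Fin 3)

/-! Both equations are the chain rule read through the identity `f̃(t, x(ξ)) = f̂(t, y(t,ξ))`:
differentiating it in `t` (along the trajectories, i.e. at fixed `ξ`) identifies the two time
derivatives, and differentiating it in `ξ` in the direction `∑ vⁱ eᵢ` identifies
`∇_M f̂ · v̂` with `∇_{S²} f̃ · ṽ`, since `v̂` and `ṽ` are the images of that direction
under `Dy` and `Dx`. -/

section ChainRule

variable {E F G : Type*} [NormedAddCommGroup E] [NormedSpace ℝ E]
  [NormedAddCommGroup F] [InnerProductSpace ℝ F] [CompleteSpace F]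
  [NormedAddCommGroup G] [InnerProductSpace ℝ G] [CompleteSpace G]
  {f : F → ℝ} {g : G → ℝ} {y : E → F} {x : E → G} {ξ : E}

theorem inner_gradient_fderiv_eq_of_comp_eq (hcomp : ∀ ζ, f (y ζ) = g (x ζ))
    (hf : DifferentiableAt ℝ f (y ξ)) (hy : DifferentiableAt ℝ y ξ)
    (hg : DifferentiableAt ℝ g (x ξ)) (hx : DifferentiableAt ℝ x ξ) (w : E) :
    ⟪gradient f (y ξ), fderiv ℝ y ξ w⟫ = ⟪gradient g (x ξ), fderiv ℝ x ξ w⟫ := by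
  have hfun : f ∘ y = g ∘ x := funext hcomp
  rw [inner_gradient_left, inner_gradient_left, ← ContinuousLinearMap.comp_apply,
    ← fderiv_comp ξ hf hy, hfun, fderiv_comp ξ hg hx, ContinuousLinearMap.comp_apply]

theorem inner_gradient_sum_fderiv_eq_of_comp_eq {ι : Type*} (s : Finset ι)
    (hcomp : ∀ ζ, f (y ζ) = g (x ζ))
    (hf : DifferentiableAt ℝ f (y ξ)) (hy : DifferentiableAt ℝ y ξ)
    (hg : DifferentiableAt ℝ g (x ξ)) (hx : DifferentiableAt ℝ x ξ) (v : ι → ℝ) (e : ι → E) :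
    ⟪gradient f (y ξ), ∑ i ∈ s, v i • fderiv ℝ y ξ (e i)⟫
      = ⟪gradient g (x ξ), ∑ i ∈ s, v i • fderiv ℝ x ξ (e i)⟫ := by
  simp only [inner_sum, inner_smul_right,
    inner_gradient_fderiv_eq_of_comp_eq hcomp hf hy hg hx]

end ChainRule

theorem stmt10_general (x : E2 → E3) (ρ : ℝ → E3 → ℝ) (fM fS : ℝ → E3 → ℝ)
    (ξ : E2) (t : ℝ)
    (hx : DifferentiableAt ℝ x ξ)
    (hcomp : ∀ s : ℝ, ∀ ζ : E2, fS s (x ζ) = fM s (ρ s (x ζ) • x ζ))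
    (hyd : DifferentiableAt ℝ (fun ζ => ρ t (x ζ) • x ζ) ξ)
    (hfM : DifferentiableAt ℝ (fM t) (ρ t (x ξ) • x ξ))
    (hfS : DifferentiableAt ℝ (fS t) (x ξ))
    (v : Fin 2 → ℝ) :
    (deriv (fun s => fM s (ρ s (x ξ) • x ξ)) t
        + ⟪gradient (fM t) (ρ t (x ξ) • x ξ),
            ∑ i, v i • fderiv ℝ (fun ζ => ρ t (x ζ) • x ζ) ξ (EuclideanSpace.single i 1)⟫
      = 0)
    ↔ (deriv (fun s => fS s (x ξ)) t
        + ⟪gradient (fS t) (x ξ),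
            ∑ i, v i • fderiv ℝ x ξ (EuclideanSpace.single i 1)⟫
      = 0) := by
  have htime : (fun s => fM s (ρ s (x ξ) • x ξ)) = fun s => fS s (x ξ) :=
    funext fun s => (hcomp s ξ).symm
  have hspace := inner_gradient_sum_fderiv_eq_of_comp_eq (y := fun ζ => ρ t (x ζ) • x ζ)
    Finset.univ (fun ζ => (hcomp t ζ).symm) hfM hyd hfS hx v
    (fun i => EuclideanSpace.single i 1)
  rw [htime, hspace]

/-- Equivalence of the parametrised optical flow equation on the evolving sphere-like
surface `M_t` (parametrised by `y(t,ξ) = ρ(t, x(ξ)) • x(ξ)`) and the corresponding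
equation on the unit sphere: with data `f̂` on `M` and `f̃` on `S²` related by
`f̃(t, x(ξ)) = f̂(t, y(t,ξ))`, and tangent fields `v̂ = vⁱ∂ᵢy`, `ṽ = vⁱ∂ᵢx` related via
the differential of `φ̃(t,·)`, one has
`d_t^V f̂ + ∇_M f̂ · v̂ = 0  ↔  ∂_t f̃ + ∇_{S²}f̃ · ṽ = 0`.
Surface gradients paired with tangent vectors are expressed through gradients of
ambient extensions `fM`, `fS`. -/
theorem stmt10 (x : E2 → E3) (ρ : ℝ → E3 → ℝ) (fM fS : ℝ → E3 → ℝ)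
    (ξ : E2) (t : ℝ)
    (hx : DifferentiableAt ℝ x ξ) (hsph : ∀ ζ, ‖x ζ‖ = 1)
    (hpos : ∀ s : ℝ, ∀ p : E3, p ≠ 0 → 0 < ρ s p)
    (hcomp : ∀ s : ℝ, ∀ ζ : E2, fS s (x ζ) = fM s (ρ s (x ζ) • x ζ))
    (hyd : DifferentiableAt ℝ (fun ζ => ρ t (x ζ) • x ζ) ξ)
    (hfM : DifferentiableAt ℝ (fM t) (ρ t (x ξ) • x ξ))
    (hfS : DifferentiableAt ℝ (fS t) (x ξ))
    (v : Fin 2 → ℝ) :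
    (deriv (fun s => fM s (ρ s (x ξ) • x ξ)) t
        + ⟪gradient (fM t) (ρ t (x ξ) • x ξ),
            ∑ i, v i • fderiv ℝ (fun ζ => ρ t (x ζ) • x ζ) ξ (EuclideanSpace.single i 1)⟫
      = 0)
    ↔ (deriv (fun s => fS s (x ξ)) t
        + ⟪gradient (fS t) (x ξ),
            ∑ i, v i • fderiv ℝ x ξ (EuclideanSpace.single i 1)⟫
      = 0) :=
  stmt10_general x ρ fM fS ξ t hx hcomp hyd hfM hfS v
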